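/- arXiv:hep-th/0105177 — 9 statements merged into one kernel-verified Lean document; each statement's English description precedes it below -/
import Mathlib

section
/- In the q-oscillator setup below, the elements y₁ = λ·K⁻¹·a₁⁻·a₂⁺, y₂ = a₂⁻, y₃ = a₁⁺·K satisfy all six cubic q-Serre relations: for every pair i ≠ j in {1,2,3}, yᵢ²yⱼ − (q + q⁻¹)·yᵢ·yⱼ·yᵢ + yⱼ·yᵢ² = 0. -/
/-!
The cubic q-Serre element factors through the q-commutator: if `z = x y - q y x`, then
`x² y - (q + q⁻¹) x y x + y x² = x z - q⁻¹ z x`, and symmetrically (exchanging `q` and `q⁻¹`) for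
`y² x - (q + q⁻¹) y x y + x y²`. So both Serre relations of a pair hold as soon as `z` q-commutes
with `x` and with `y` with the right powers of `q`.

In the oscillator realization every generator is a monomial, and monomials q-commute with a
factor that is multiplicative in both arguments. The pair `(y₂, y₃)` q-commutes outright. For
`(y₁, y₃)` and `(y₂, y₁)` the q-commutator contains `q a⁺a⁻ - q⁻¹ a⁻a⁺` of one oscillator, which
is a scalar, leaving the monomials `a₂⁺` and `K⁻¹ a₁⁻`, and these q-commute with both members of
the pair.
-/

section

variable {F A : Type*} [Field F] [Ring A] [Algebra F A]

def QCommute (s : F) (x y : A) : Prop := x * y = s • (y * x)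

def qSerre (q : F) (x y : A) : A := x ^ 2 * y - (q + q⁻¹) • (x * y * x) + y * x ^ 2

namespace QCommute

variable {s t : F} {x y z : A}

theorem one_iff : QCommute (1 : F) x y ↔ Commute x y := by
  rw [QCommute, one_smul]; rfl

theorem of_commute (h : Commute x y) : QCommute (1 : F) x y := one_iff.2 h

theorem refl (x : A) : QCommute (1 : F) x x := of_commute (Commute.refl x)

theorem zero_right (s : F) (x : A) : QCommute s x 0 := by simp [QCommute]

theorem mul_left (hx : QCommute s x z) (hy : QCommute t y z) : QCommute (s * t) (x * y) z := by
  unfold QCommute at *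
  rw [mul_assoc, hy, mul_smul_comm, ← mul_assoc, hx, smul_mul_assoc, smul_smul, mul_assoc,
    mul_comm t]

theorem mul_right (hy : QCommute s x y) (hz : QCommute t x z) : QCommute (s * t) x (y * z) := by
  unfold QCommute at *
  rw [← mul_assoc, hy, smul_mul_assoc, mul_assoc, hz, mul_smul_comm, smul_smul, mul_assoc]

theorem smul_left (c : F) (h : QCommute s x y) : QCommute s (c • x) y := by
  unfold QCommute at *
  rw [smul_mul_assoc, h, mul_smul_comm, smul_comm]

theorem smul_right (c : F) (h : QCommute s x y) : QCommute s x (c • y) := by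
  unfold QCommute at *
  rw [mul_smul_comm, h, smul_mul_assoc, smul_comm]

theorem symm (hs : s ≠ 0) (h : QCommute s x y) : QCommute s⁻¹ y x := by
  unfold QCommute at *
  rw [h, smul_smul, inv_mul_cancel₀ hs, one_smul]

theorem conj_eq {K Ki : A} (hK' : Ki * K = 1) (h : QCommute s x K) : Ki * x * K = s • x := by
  rw [mul_assoc, h, mul_smul_comm, ← mul_assoc, hK', one_mul]

theorem inverse_right {K Ki : A} (hK : K * Ki = 1) (hK' : Ki * K = 1) (h : QCommute s K x) :
    QCommute s x Ki := by
  unfold QCommute at *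
  calc x * Ki = Ki * (K * x) * Ki := by rw [← mul_assoc, hK', one_mul]
    _ = s • (Ki * x) := by
      rw [h, mul_smul_comm, smul_mul_assoc, mul_assoc, mul_assoc, hK, mul_one]

end QCommute

section qSerre

variable {q : F} {x y z : A}

theorem qSerre_inv (q : F) (x y : A) : qSerre q⁻¹ x y = qSerre q x y := by
  rw [qSerre, qSerre, inv_inv, add_comm q⁻¹]

theorem qSerre_eq_of_commutator (hq : q ≠ 0) (h : x * y - q • (y * x) = z) :
    qSerre q x y = x * z - q⁻¹ • (z * x) := by
  rw [← h, qSerre, mul_sub, sub_mul, mul_smul_comm, smul_mul_assoc, smul_sub, smul_smul,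
    inv_mul_cancel₀ hq, one_smul, add_smul]
  simp only [pow_two, mul_assoc]
  abel

theorem qSerre_eq_zero_of_commutator (hq : q ≠ 0) (h : x * y - q • (y * x) = z)
    (hx : QCommute q⁻¹ x z) : qSerre q x y = 0 := by
  rw [qSerre_eq_of_commutator hq h, hx, sub_self]

theorem qSerre_eq_zero_and_of_commutator (hq : q ≠ 0) (h : x * y - q • (y * x) = z)
    (hx : QCommute q⁻¹ x z) (hy : QCommute q y z) : qSerre q x y = 0 ∧ qSerre q y x = 0 := by
  refine ⟨qSerre_eq_zero_of_commutator hq h hx, ?_⟩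
  -- `y x - q⁻¹ x y = -q⁻¹ z`, so apply the first half with `q⁻¹` in place of `q`
  rw [← qSerre_inv]
  refine qSerre_eq_zero_of_commutator (z := (-q⁻¹) • z) (inv_ne_zero hq) ?_ ?_
  · rw [← h, smul_sub, smul_smul, neg_mul, inv_mul_cancel₀ hq, neg_smul, neg_smul, one_smul]
    abel
  · rw [inv_inv]; exact hy.smul_right _

end qSerre

theorem qSerre_eq_zero_and_of_qCommute {q : F} {x y : A} (hq : q ≠ 0) (h : QCommute q x y) :
    qSerre q x y = 0 ∧ qSerre q y x = 0 :=
  qSerre_eq_zero_and_of_commutator hq (by rw [← h, sub_self]) (.zero_right _ _) (.zero_right _ _)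

section Oscillator

variable {q c lam : F} {a1p a1m a2p a2m K Ki : A}

theorem qSerre_oscillator_y1_y3 (hq : q ≠ 0) (hK : K * Ki = 1) (hK' : Ki * K = 1)
    (hosc1 : q • (a1p * a1m) - q⁻¹ • (a1m * a1p) = c • (1 : A))
    (hc1 : a1p * a2p = a2p * a1p) (hc3 : a1m * a2p = a2p * a1m)
    (hK2p : K * a2p = q • (a2p * K)) (hK1p : K * a1p = a1p * K) (hK1m : K * a1m = a1m * K) :
    qSerre q (lam • (Ki * a1m * a2p)) (a1p * K) = 0 ∧
      qSerre q (a1p * K) (lam • (Ki * a1m * a2p)) = 0 := by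
  have hKi2p : QCommute q a2p Ki := QCommute.inverse_right hK hK' hK2p
  refine qSerre_eq_zero_and_of_commutator hq (z := -(lam * c) • a2p) ?_ ?_ ?_
  · have hK_conj : QCommute q⁻¹ (a1m * a1p * a2p) K := by
      simpa only [one_mul] using ((QCommute.of_commute (Commute.symm hK1m)).mul_left
        (QCommute.of_commute (Commute.symm hK1p))).mul_left (QCommute.symm hq hK2p)
    have hXY : Ki * a1m * a2p * (a1p * K) = q⁻¹ • (a1m * a1p * a2p) := by
      rw [← hK_conj.conj_eq hK']
      simp only [mul_assoc, hc1]
    have hYX : a1p * K * (Ki * a1m * a2p) = a1p * a1m * a2p := by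
      simp only [mul_assoc, ← mul_assoc K, hK, one_mul]
    calc _ = lam • ((q⁻¹ • (a1m * a1p) - q • (a1p * a1m)) * a2p) := by
          rw [smul_mul_assoc, mul_smul_comm, smul_comm q, ← smul_sub, hXY, hYX, sub_mul,
            smul_mul_assoc, smul_mul_assoc]
      _ = -(lam * c) • a2p := by
          rw [← neg_sub, hosc1, neg_mul, smul_mul_assoc, one_mul, smul_neg, smul_smul, neg_smul]
  · simpa only [mul_one] using
      (((QCommute.symm hq hKi2p).mul_left (QCommute.of_commute hc3)).mul_left
        (QCommute.refl a2p)).smul_left lam |>.smul_right _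
  · simpa only [one_mul] using ((QCommute.of_commute hc1).mul_left hK2p).smul_right _

theorem qSerre_oscillator_y2_y1 (hq : q ≠ 0) (hK : K * Ki = 1) (hK' : Ki * K = 1)
    (hosc2 : q • (a2p * a2m) - q⁻¹ • (a2m * a2p) = c • (1 : A))
    (hc3 : a1m * a2p = a2p * a1m) (hc4 : a1m * a2m = a2m * a1m)
    (hK2p : K * a2p = q • (a2p * K)) (hK2m : K * a2m = q⁻¹ • (a2m * K))
    (hK1m : K * a1m = a1m * K) :
    qSerre q a2m (lam • (Ki * a1m * a2p)) = 0 ∧ qSerre q (lam • (Ki * a1m * a2p)) a2m = 0 := by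
  have hKi1m : Commute a1m Ki :=
    QCommute.one_iff.1 (QCommute.inverse_right (F := F) hK hK' (QCommute.of_commute hK1m))
  have h2m : QCommute q⁻¹ a2m (Ki * a1m) := by
    simpa only [mul_one] using
      (QCommute.inverse_right hK hK' hK2m).mul_right (QCommute.of_commute hc4.symm)
  refine qSerre_eq_zero_and_of_commutator hq (z := -(lam * c) • (Ki * a1m)) ?_ ?_ ?_
  · calc _ = lam • (Ki * a1m * (q⁻¹ • (a2m * a2p) - q • (a2p * a2m))) := by
          rw [mul_smul_comm, smul_mul_assoc, smul_comm q, ← smul_sub, ← mul_assoc, h2m,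
            mul_sub, smul_mul_assoc, mul_smul_comm, mul_smul_comm]
          simp only [mul_assoc]
      _ = -(lam * c) • (Ki * a1m) := by
          rw [← neg_sub, hosc2, mul_neg, mul_smul_comm, mul_one, smul_neg, smul_smul, neg_smul]
  · exact h2m.smul_right _
  · have hKi : QCommute (1 : F) Ki (Ki * a1m) :=
      .of_commute ((Commute.refl Ki).mul_right hKi1m.symm)
    have h1m : QCommute (1 : F) a1m (Ki * a1m) := .of_commute (hKi1m.mul_right (Commute.refl a1m))
    have h2p : QCommute q a2p (Ki * a1m) := by
      simpa only [mul_one] using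
        (QCommute.inverse_right hK hK' hK2p).mul_right (QCommute.of_commute hc3.symm)
    simpa only [one_mul] using ((hKi.mul_left h1m).mul_left h2p).smul_left lam |>.smul_right _

end Oscillator

end

theorem stmt_4_general {F A : Type*} [Field F] [Ring A] [Algebra F A]
    (q lam : F) (hq0 : q ≠ 0)
    (a1p a1m a2p a2m K Ki : A)
    (hK : K * Ki = 1) (hK' : Ki * K = 1)
    (hosc1 : q • (a1p * a1m) - q⁻¹ • (a1m * a1p) = (q - q⁻¹)⁻¹ • (1 : A))
    (hosc2 : q • (a2p * a2m) - q⁻¹ • (a2m * a2p) = (q - q⁻¹)⁻¹ • (1 : A))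
    (hc1 : a1p * a2p = a2p * a1p) (hc2 : a1p * a2m = a2m * a1p)
    (hc3 : a1m * a2p = a2p * a1m) (hc4 : a1m * a2m = a2m * a1m)
    (hK2p : K * a2p = q • (a2p * K)) (hK2m : K * a2m = q⁻¹ • (a2m * K))
    (hK1p : K * a1p = a1p * K) (hK1m : K * a1m = a1m * K)
    (y : Fin 3 → A)
    (hy1 : y 0 = lam • (Ki * a1m * a2p))
    (hy2 : y 1 = a2m)
    (hy3 : y 2 = a1p * K) :
    ∀ i j : Fin 3, i ≠ j →
      (y i) ^ 2 * y j - (q + q⁻¹) • (y i * y j * y i) + y j * (y i) ^ 2 = 0 := by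
  obtain ⟨h13, h31⟩ := qSerre_oscillator_y1_y3 (lam := lam) hq0 hK hK' hosc1 hc1 hc3 hK2p hK1p hK1m
  obtain ⟨h21, h12⟩ :=
    qSerre_oscillator_y2_y1 (lam := lam) hq0 hK hK' hosc2 hc3 hc4 hK2p hK2m hK1m
  have hq23 : QCommute q a2m (a1p * K) := by
    simpa only [one_mul, inv_inv] using
      (QCommute.of_commute hc2.symm).mul_right (QCommute.symm (inv_ne_zero hq0) hK2m)
  obtain ⟨h23, h32⟩ := qSerre_eq_zero_and_of_qCommute hq0 hq23
  intro i j hij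
  change qSerre q (y i) (y j) = 0
  fin_cases i <;> fin_cases j
  all_goals first
    | exact absurd rfl hij
    | simp only [Fin.zero_eta, Fin.mk_one, Fin.reduceFinMk, hy1, hy2, hy3]; assumption

/-- The q-oscillator realization `y₁ = λ·K⁻¹·a₁⁻·a₂⁺`, `y₂ = a₂⁻`, `y₃ = a₁⁺·K`
of the Borel subalgebra of `U_q(sl₃-hat)` satisfies all six cubic q-Serre relations. -/
theorem stmt_4 {F A : Type*} [Field F] [Ring A] [Algebra F A]
    (q lam : F) (hq0 : q ≠ 0) (hq1 : q ^ 2 ≠ 1)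
    (a1p a1m a2p a2m K Ki : A)
    (hK : K * Ki = 1) (hK' : Ki * K = 1)
    (hosc1 : q • (a1p * a1m) - q⁻¹ • (a1m * a1p) = (q - q⁻¹)⁻¹ • (1 : A))
    (hosc2 : q • (a2p * a2m) - q⁻¹ • (a2m * a2p) = (q - q⁻¹)⁻¹ • (1 : A))
    (hc1 : a1p * a2p = a2p * a1p) (hc2 : a1p * a2m = a2m * a1p)
    (hc3 : a1m * a2p = a2p * a1m) (hc4 : a1m * a2m = a2m * a1m)
    (hK2p : K * a2p = q • (a2p * K)) (hK2m : K * a2m = q⁻¹ • (a2m * K))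
    (hK1p : K * a1p = a1p * K) (hK1m : K * a1m = a1m * K)
    (y : Fin 3 → A)
    (hy1 : y 0 = lam • (Ki * a1m * a2p))
    (hy2 : y 1 = a2m)
    (hy3 : y 2 = a1p * K) :
    ∀ i j : Fin 3, i ≠ j →
      (y i) ^ 2 * y j - (q + q⁻¹) • (y i * y j * y i) + y j * (y i) ^ 2 = 0 :=
  stmt_4_general q lam hq0 a1p a1m a2p a2m K Ki hK hK' hosc1 hosc2 hc1 hc2 hc3 hc4 hK2p hK2m hK1p
    hK1m y hy1 hy2 hy3
end

section
/- In the q-oscillator setup below, with y₁ = λ·K⁻¹·a₁⁻·a₂⁺, y₂ = a₂⁻, y₃ = a₁⁺·K, and with the q-commutator notation y_{ij} = yᵢyⱼ − q·yⱼyᵢ, the following additional relations hold: (i) y_{23} = 0; (ii) q·y₃·y_{21} − q⁻¹·y_{21}·y₃ = −λ·(q−q⁻¹)⁻²·1; (iii) q·y_{13}·y₂ − q⁻¹·y₂·y_{13} = −λ·(q−q⁻¹)⁻²·1. -/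
/-!
Both q-commutators `y₂₁` and `y₁₃` collapse to a multiple of a single generator: moving `a₂⁻`
(resp. `a₁⁺ K`) through `y₁` leaves the q-commutator of an oscillator pair, which is a scalar.
Explicitly `y₂₁ = -λ(q - q⁻¹)⁻¹ K⁻¹a₁⁻` and `y₁₃ = -λ(q - q⁻¹)⁻¹ a₂⁺`, so (ii) and (iii) are the
oscillator relations of the first and second pair, rescaled by `-λ(q - q⁻¹)⁻¹`.
-/

theorem Units.mul_inv_eq_smul_of_mul_eq_smul {R A : Type*} [CommSemiring R] [Semiring A]
    [Algebra R A] (u : Aˣ) {a : A} {s : R} (h : ↑u * a = s • (a * ↑u)) :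
    a * ↑u⁻¹ = s • (↑u⁻¹ * a) :=
  calc a * ↑u⁻¹ = ↑u⁻¹ * (↑u * a) * ↑u⁻¹ := by rw [Units.inv_mul_cancel_left]
    _ = s • (↑u⁻¹ * a) := by
      rw [h, mul_smul_comm, smul_mul_assoc, ← mul_assoc, Units.mul_inv_cancel_right]

section Oscillator

variable {F A : Type*} [Field F] [Ring A] [Algebra F A] {q c : F} {a b : A}

theorem mul_mul_sub_smul_mul_mul_of_oscillator
    (hosc : q • (a * b) - q⁻¹ • (b * a) = c • 1) {x : A} (hbx : b * x = q⁻¹ • (x * b)) :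
    b * (x * a) - q • (x * a * b) = -c • x :=
  calc b * (x * a) - q • (x * a * b) = x * (q⁻¹ • (b * a) - q • (a * b)) := by
        rw [← mul_assoc, hbx, smul_mul_assoc, mul_sub, mul_smul_comm, mul_smul_comm, mul_assoc,
          mul_assoc]
    _ = -c • x := by rw [← neg_sub, hosc, mul_neg, mul_smul_comm, mul_one, neg_smul]

theorem inv_mul_mul_mul_sub_smul_of_oscillator (hq : q ≠ 0)
    (hosc : q • (a * b) - q⁻¹ • (b * a) = c • 1) {u : Aˣ} {z : A} (hua : Commute (↑u) a)
    (hub : Commute (↑u) b) (haz : Commute a z) (huz : ↑u * z = q • (z * ↑u)) :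
    ↑u⁻¹ * b * z * (a * ↑u) - q • (a * ↑u * (↑u⁻¹ * b * z)) = -c • z := by
  have hleft : ↑u⁻¹ * b * z * (a * ↑u) = q⁻¹ • (b * a * z) :=
    calc ↑u⁻¹ * b * z * (a * ↑u) = ↑u⁻¹ * (b * a) * (z * ↑u) := by
          simp only [mul_assoc]
          rw [← mul_assoc z, ← haz.eq, mul_assoc]
      _ = q⁻¹ • (b * a * z) := by
          rw [(eq_inv_smul_iff₀ hq).2 huz.symm, mul_smul_comm, ← mul_assoc,
            ((hub.mul_right hua).units_inv_left).eq, Units.inv_mul_cancel_right]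
  have hright : a * ↑u * (↑u⁻¹ * b * z) = a * b * z := by
    simp only [mul_assoc, Units.mul_inv_cancel_left]
  calc ↑u⁻¹ * b * z * (a * ↑u) - q • (a * ↑u * (↑u⁻¹ * b * z))
      = (q⁻¹ • (b * a) - q • (a * b)) * z := by
        rw [hleft, hright, sub_mul, smul_mul_assoc, smul_mul_assoc]
    _ = -c • z := by rw [← neg_sub, hosc, neg_mul, smul_mul_assoc, one_mul, neg_smul]

end Oscillator

theorem stmt_5_general {F A : Type*} [Field F] [Ring A] [Algebra F A]
    (q lam : F) (hq0 : q ≠ 0)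
    (a1p a1m a2p a2m K Ki : A)
    (hK : K * Ki = 1) (hK' : Ki * K = 1)
    (hosc1 : q • (a1p * a1m) - q⁻¹ • (a1m * a1p) = (q - q⁻¹)⁻¹ • (1 : A))
    (hosc2 : q • (a2p * a2m) - q⁻¹ • (a2m * a2p) = (q - q⁻¹)⁻¹ • (1 : A))
    (hc1 : a1p * a2p = a2p * a1p) (hc2 : a1p * a2m = a2m * a1p)
    (hc4 : a1m * a2m = a2m * a1m)
    (hK2p : K * a2p = q • (a2p * K)) (hK2m : K * a2m = q⁻¹ • (a2m * K))
    (hK1p : K * a1p = a1p * K) (hK1m : K * a1m = a1m * K)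
    (y1 y2 y3 y21 y13 : A)
    (hy1 : y1 = lam • (Ki * a1m * a2p))
    (hy2 : y2 = a2m)
    (hy3 : y3 = a1p * K)
    (hy21 : y21 = y2 * y1 - q • (y1 * y2))
    (hy13 : y13 = y1 * y3 - q • (y3 * y1)) :
    y2 * y3 - q • (y3 * y2) = 0 ∧
    q • (y3 * y21) - q⁻¹ • (y21 * y3) = (-(lam * ((q - q⁻¹) ^ 2)⁻¹)) • (1 : A) ∧
    q • (y13 * y2) - q⁻¹ • (y2 * y13) = (-(lam * ((q - q⁻¹) ^ 2)⁻¹)) • (1 : A) := by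
  set c := (q - q⁻¹)⁻¹
  let u : Aˣ := ⟨K, Ki, hK, hK'⟩
  have hrhs : -(lam * ((q - q⁻¹) ^ 2)⁻¹) = -(lam * c) * c := by rw [sq, mul_inv]; ring
  have hKi2m : a2m * Ki = q⁻¹ • (Ki * a2m) := u.mul_inv_eq_smul_of_mul_eq_smul hK2m
  have ha2m : a2m * (Ki * a1m) = q⁻¹ • (Ki * a1m * a2m) := by
    rw [← mul_assoc, hKi2m, smul_mul_assoc, mul_assoc, ← hc4, mul_assoc]
  have hy21' : y21 = (-(lam * c)) • (Ki * a1m) := by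
    rw [hy21, hy1, hy2, mul_smul_comm, smul_mul_assoc, smul_comm q lam, ← smul_sub,
      mul_mul_sub_smul_mul_mul_of_oscillator hosc2 ha2m, smul_smul, neg_mul_eq_mul_neg]
  have hcomm13 : Ki * a1m * a2p * (a1p * K) - q • (a1p * K * (Ki * a1m * a2p)) = -c • a2p :=
    inv_mul_mul_mul_sub_smul_of_oscillator (u := u) hq0 hosc1 hK1p hK1m hc1 hK2p
  have hy13' : y13 = (-(lam * c)) • a2p := by
    rw [hy13, hy1, hy3, mul_smul_comm, smul_mul_assoc, smul_comm q lam, ← smul_sub, hcomm13,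
      smul_smul, neg_mul_eq_mul_neg]
  refine ⟨?_, ?_, ?_⟩
  · rw [hy2, hy3, mul_assoc, hK2m, mul_smul_comm, ← mul_assoc a1p, hc2, mul_assoc, smul_smul,
      mul_inv_cancel₀ hq0, one_smul, sub_self]
  · have hKi1 : Commute Ki (a1m * a1p) :=
      Commute.units_inv_left (u := u) (Commute.mul_right hK1m hK1p)
    have hK1 : Ki * a1m * (a1p * K) = a1m * a1p := by
      rw [← mul_assoc, mul_assoc Ki, hKi1.eq, mul_assoc, hK', mul_one]
    rw [hy21', hy3, hrhs, mul_smul, ← hosc1, mul_smul_comm, smul_mul_assoc, hK1,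
      mul_assoc, ← mul_assoc K, hK, one_mul]
    module
  · rw [hy13', hy2, hrhs, mul_smul, ← hosc2, smul_mul_assoc, mul_smul_comm]
    module

/-- The extra relations satisfied by the q-oscillator realization
`y₁ = λ·K⁻¹·a₁⁻·a₂⁺`, `y₂ = a₂⁻`, `y₃ = a₁⁺·K`, with the q-commutator
`y_{ij} = yᵢyⱼ - q·yⱼyᵢ`:
(i) `y₂₃ = 0`, (ii) `q·y₃·y₂₁ - q⁻¹·y₂₁·y₃ = -λ(q-q⁻¹)⁻²·1`,
(iii) `q·y₁₃·y₂ - q⁻¹·y₂·y₁₃ = -λ(q-q⁻¹)⁻²·1`. -/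
theorem stmt_5 {F A : Type*} [Field F] [Ring A] [Algebra F A]
    (q lam : F) (hq0 : q ≠ 0) (hq1 : q ^ 2 ≠ 1)
    (a1p a1m a2p a2m K Ki : A)
    (hK : K * Ki = 1) (hK' : Ki * K = 1)
    (hosc1 : q • (a1p * a1m) - q⁻¹ • (a1m * a1p) = (q - q⁻¹)⁻¹ • (1 : A))
    (hosc2 : q • (a2p * a2m) - q⁻¹ • (a2m * a2p) = (q - q⁻¹)⁻¹ • (1 : A))
    (hc1 : a1p * a2p = a2p * a1p) (hc2 : a1p * a2m = a2m * a1p)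
    (hc3 : a1m * a2p = a2p * a1m) (hc4 : a1m * a2m = a2m * a1m)
    (hK2p : K * a2p = q • (a2p * K)) (hK2m : K * a2m = q⁻¹ • (a2m * K))
    (hK1p : K * a1p = a1p * K) (hK1m : K * a1m = a1m * K)
    (y1 y2 y3 y21 y13 : A)
    (hy1 : y1 = lam • (Ki * a1m * a2p))
    (hy2 : y2 = a2m)
    (hy3 : y3 = a1p * K)
    (hy21 : y21 = y2 * y1 - q • (y1 * y2))
    (hy13 : y13 = y1 * y3 - q • (y3 * y1)) :
    y2 * y3 - q • (y3 * y2) = 0 ∧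
    q • (y3 * y21) - q⁻¹ • (y21 * y3) = (-(lam * ((q - q⁻¹) ^ 2)⁻¹)) • (1 : A) ∧
    q • (y13 * y2) - q⁻¹ • (y2 * y13) = (-(lam * ((q - q⁻¹) ^ 2)⁻¹)) • (1 : A) :=
  stmt_5_general q lam hq0 a1p a1m a2p a2m K Ki hK hK' hosc1 hosc2 hc1 hc2 hc4 hK2p hK2m hK1p hK1m
    y1 y2 y3 y21 y13 hy1 hy2 hy3 hy21 hy13
end

section
/- In the q-oscillator setup below with Cartan elements H₁, H₂, define h₁ = −H₁ + H₂, h₂ = −H₁ − 2H₂, h₃ = 2H₁ + H₂ and y₁ = λ·K⁻¹·a₁⁻·a₂⁺, y₂ = a₂⁻, y₃ = a₁⁺·K. Then h₁ + h₂ + h₃ = 0, and the Cartan commutation relations [hᵢ, yⱼ] = aᵢⱼ·yⱼ hold for all i, j ∈ {1,2,3}, where aᵢᵢ = 2 and aᵢⱼ = −1 for i ≠ j. -/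
/-!
Since `x ↦ H * x - x * H` is a derivation and `K⁻¹` commutes with `H₁, H₂`, each `yⱼ` is a joint
eigenvector of the adjoint actions of `H₁` and `H₂`, with weights `(-1, 1)`, `(0, -1)`, `(1, 0)`.
Each `hᵢ` is a combination `mᵢ • H₁ + nᵢ • H₂`, so `[hᵢ, yⱼ]` is `yⱼ` scaled by the pairing of
`(mᵢ, nᵢ)` with the weight of `yⱼ`, and these pairings are the entries of the Cartan matrix.
-/

section Commutator

variable {R A : Type*} [CommSemiring R] [Ring A] [Algebra R A]

theorem commutator_mul (H x y : A) :
    H * (x * y) - x * y * H = (H * x - x * H) * y + x * (H * y - y * H) := by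
  noncomm_ring

theorem commutator_smul (H x : A) (t : R) :
    H * (t • x) - t • x * H = t • (H * x - x * H) := by
  rw [mul_smul_comm, smul_mul_assoc, smul_sub]

theorem commutator_units_inv_eq_zero {H : A} {u : Aˣ} (h : H * u - u * H = 0) :
    H * ↑u⁻¹ - ↑u⁻¹ * H = 0 :=
  sub_eq_zero.mpr (Commute.units_inv_right (sub_eq_zero.mp h))

theorem commutator_smul_add_smul {H₁ H₂ x : A} {c₁ c₂ a b : R}
    (h₁ : H₁ * x - x * H₁ = c₁ • x) (h₂ : H₂ * x - x * H₂ = c₂ • x) :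
    (a • H₁ + b • H₂) * x - x * (a • H₁ + b • H₂) = (a * c₁ + b * c₂) • x := by
  have : (a • H₁ + b • H₂) * x - x * (a • H₁ + b • H₂)
      = a • (H₁ * x - x * H₁) + b • (H₂ * x - x * H₂) := by
    simp only [add_mul, mul_add, smul_mul_assoc, mul_smul_comm, smul_sub]; abel
  rw [this, h₁, h₂, smul_smul, smul_smul, add_smul]

end Commutator

theorem stmt_6_general {F A : Type*} [Field F] [Ring A] [Algebra F A]
    (lam : F)
    (a1p a1m a2p a2m H1 H2 K Ki : A)
    (hK : K * Ki = 1) (hK' : Ki * K = 1)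
    (hH1a1p : H1 * a1p - a1p * H1 = a1p) (hH1a1m : H1 * a1m - a1m * H1 = -a1m)
    (hH2a2p : H2 * a2p - a2p * H2 = a2p) (hH2a2m : H2 * a2m - a2m * H2 = -a2m)
    (hH1a2p : H1 * a2p - a2p * H1 = 0) (hH1a2m : H1 * a2m - a2m * H1 = 0)
    (hH2a1p : H2 * a1p - a1p * H2 = 0) (hH2a1m : H2 * a1m - a1m * H2 = 0)
    (hH1K : H1 * K - K * H1 = 0) (hH2K : H2 * K - K * H2 = 0)
    (h y : Fin 3 → A)
    (hh1 : h 0 = -H1 + H2) (hh2 : h 1 = -H1 - (2 : ℕ) • H2)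
    (hh3 : h 2 = (2 : ℕ) • H1 + H2)
    (hy1 : y 0 = lam • (Ki * a1m * a2p)) (hy2 : y 1 = a2m) (hy3 : y 2 = a1p * K) :
    h 0 + h 1 + h 2 = 0 ∧
    ∀ i j : Fin 3, h i * y j - y j * h i = (if i = j then (2 : F) else -1) • y j := by
  let u : Aˣ := ⟨K, Ki, hK, hK'⟩
  have hH1Ki : H1 * Ki - Ki * H1 = 0 := commutator_units_inv_eq_zero (u := u) hH1K
  have hH2Ki : H2 * Ki - Ki * H2 = 0 := commutator_units_inv_eq_zero (u := u) hH2K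
  have hweight : ∀ j, H1 * y j - y j * H1 = (![-1, 0, 1] : Fin 3 → F) j • y j ∧
      H2 * y j - y j * H2 = (![1, -1, 0] : Fin 3 → F) j • y j := by
    intro j; fin_cases j <;> constructor
    all_goals simp only [Fin.zero_eta, Fin.mk_one, Fin.reduceFinMk, Matrix.cons_val, hy1, hy2, hy3,
      commutator_smul, commutator_mul, hH1Ki, hH1a1m, hH1a2p, hH1a2m, hH1a1p, hH1K, hH2Ki, hH2a1m,
      hH2a2p, hH2a2m, hH2a1p, hH2K, zero_mul, mul_zero, zero_add, add_zero, mul_neg, neg_mul]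
    all_goals module
  have hcoweight : ∀ i, h i = (![-1, -1, 2] : Fin 3 → F) i • H1 + (![1, -2, 1] : Fin 3 → F) i • H2 := by
    intro i; fin_cases i
    all_goals simp only [Fin.zero_eta, Fin.mk_one, Fin.reduceFinMk, Matrix.cons_val, hh1, hh2, hh3]
    all_goals module
  refine ⟨by rw [hh1, hh2, hh3]; abel, fun i j => ?_⟩
  rw [hcoweight i, commutator_smul_add_smul (hweight j).1 (hweight j).2]
  congr 1
  fin_cases i <;> fin_cases j <;> norm_num

/-- Cartan part of the q-oscillator realization: with
`h₁ = -H₁+H₂`, `h₂ = -H₁-2H₂`, `h₃ = 2H₁+H₂` and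
`y₁ = λ·K⁻¹·a₁⁻·a₂⁺`, `y₂ = a₂⁻`, `y₃ = a₁⁺·K`, one has `h₁+h₂+h₃ = 0`
and `[hᵢ, yⱼ] = aᵢⱼ·yⱼ`, where `a` is the Cartan matrix of `A₂⁽¹⁾`. -/
theorem stmt_6 {F A : Type*} [Field F] [CharZero F] [Ring A] [Algebra F A]
    (q lam : F) (hq0 : q ≠ 0)
    (a1p a1m a2p a2m H1 H2 K Ki : A)
    (hK : K * Ki = 1) (hK' : Ki * K = 1)
    (hH1a1p : H1 * a1p - a1p * H1 = a1p) (hH1a1m : H1 * a1m - a1m * H1 = -a1m)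
    (hH2a2p : H2 * a2p - a2p * H2 = a2p) (hH2a2m : H2 * a2m - a2m * H2 = -a2m)
    (hH1a2p : H1 * a2p - a2p * H1 = 0) (hH1a2m : H1 * a2m - a2m * H1 = 0)
    (hH2a1p : H2 * a1p - a1p * H2 = 0) (hH2a1m : H2 * a1m - a1m * H2 = 0)
    (hH1K : H1 * K - K * H1 = 0) (hH2K : H2 * K - K * H2 = 0)
    (hK2p : K * a2p = q • (a2p * K)) (hK2m : K * a2m = q⁻¹ • (a2m * K))
    (hK1p : K * a1p = a1p * K) (hK1m : K * a1m = a1m * K)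
    (hc1 : a1p * a2p = a2p * a1p) (hc2 : a1p * a2m = a2m * a1p)
    (hc3 : a1m * a2p = a2p * a1m) (hc4 : a1m * a2m = a2m * a1m)
    (h y : Fin 3 → A)
    (hh1 : h 0 = -H1 + H2) (hh2 : h 1 = -H1 - (2 : ℕ) • H2)
    (hh3 : h 2 = (2 : ℕ) • H1 + H2)
    (hy1 : y 0 = lam • (Ki * a1m * a2p)) (hy2 : y 1 = a2m) (hy3 : y 2 = a1p * K) :
    h 0 + h 1 + h 2 = 0 ∧
    ∀ i j : Fin 3, h i * y j - y j * h i = (if i = j then (2 : F) else -1) • y j :=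
  stmt_6_general lam a1p a1m a2p a2m H1 H2 K Ki hK hK' hH1a1p hH1a1m hH2a2p hH2a2m hH1a2p hH1a2m
    hH2a1p hH2a1m hH1K hH2K h y hh1 hh2 hh3 hy1 hy2 hy3
end

section
/- Let q ∈ ℂ, q ≠ 0, let Q₁, Q₂, Q₃ : ℂ → ℂ be functions, and let z₀ ∈ ℂ, z₀ ≠ 0, be such that the quantum Wronskian condition holds: det(Qᵢ(t·q^{−2j}))_{i,j∈{1,2,3}} = z₀ for every t ∈ ℂ. Define T(t) = z₀⁻¹·det M(t), where M(t) is the 3×3 matrix whose columns are (Qᵢ(tq³))ᵢ, (Qᵢ(tq⁻¹))ᵢ, (Qᵢ(tq⁻³))ᵢ, and T̄(t) = z₀⁻¹·det N(t), where N(t) has columns (Qᵢ(tq³))ᵢ, (Qᵢ(tq))ᵢ, (Qᵢ(tq⁻³))ᵢ. Then the Baxter T–Q relation holds: for every i ∈ {1,2,3} and every t ∈ ℂ, Qᵢ(tq³) − T(t)·Qᵢ(tq) + T̄(t)·Qᵢ(tq⁻¹) − Qᵢ(tq⁻³) = 0. -/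
/-!
For fixed `t`, write `v n = (Qᵢ(t qⁿ))ᵢ ∈ ℂ³`. Any four vectors in `ℂ³` satisfy the linear
relation whose coefficients are their alternating 3×3 minors (Cramer's rule). For
`v 3, v 1, v (-1), v (-3)` the outer two minors are quantum Wronskians at `t q⁵` and `t q³`,
hence equal to `z₀`, and the inner two are `z₀ T(t)` and `z₀ T̄(t)`.
-/

theorem Matrix.sum_neg_one_pow_mul_det_succAbove_smul_eq_zero {R : Type*} [CommRing R] {n : ℕ}
    (v : Fin (n + 1) → Fin n → R) :
    ∑ k : Fin (n + 1), ((-1) ^ (k : ℕ) * (Matrix.of (v ∘ k.succAbove)).det) • v k = 0 := by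
  ext i
  -- the `i`-th coordinate is the first-row expansion of a determinant with two equal rows
  let M : Matrix (Fin (n + 1)) (Fin (n + 1)) R :=
    Matrix.of (Fin.cons (fun k => v k i) fun i' k => v k i')
  have hM : M.det = 0 := Matrix.det_zero_of_row_eq (Fin.succ_ne_zero i).symm rfl
  rw [Matrix.det_succ_row_zero] at hM
  simp only [Finset.sum_apply, Pi.smul_apply, smul_eq_mul, Pi.zero_apply, ← hM]
  refine Finset.sum_congr rfl fun k _ => ?_
  rw [mul_right_comm, ← Matrix.det_transpose]
  rfl

/-- The Baxter T–Q relation for `U_q(sl₃-hat)`: if the three Q-functions satisfy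
the quantum Wronskian condition `det(Qᵢ(t·q^{-2j}))_{i,j=1,2,3} = z₀` for all `t`,
and `T`, `T̄` are defined as the normalized determinants with columns evaluated
at `(tq³, tq⁻¹, tq⁻³)` and `(tq³, tq, tq⁻³)` respectively, then
`Qᵢ(tq³) - T(t)·Qᵢ(tq) + T̄(t)·Qᵢ(tq⁻¹) - Qᵢ(tq⁻³) = 0`. -/
theorem stmt_7 (q : ℂ) (hq : q ≠ 0) (Q : Fin 3 → ℂ → ℂ) (z0 : ℂ) (hz0 : z0 ≠ 0)
    (hw : ∀ t : ℂ,
      (Matrix.of fun i j : Fin 3 => Q i (t * q ^ (-2 * (((j : ℕ) : ℤ) + 1)))).det = z0)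
    (T Tb : ℂ → ℂ)
    (hT : ∀ t : ℂ, T t = z0⁻¹ *
      (Matrix.of fun i j : Fin 3 => Q i (t * q ^ ((![3, -1, -3] : Fin 3 → ℤ) j))).det)
    (hTb : ∀ t : ℂ, Tb t = z0⁻¹ *
      (Matrix.of fun i j : Fin 3 => Q i (t * q ^ ((![3, 1, -3] : Fin 3 → ℤ) j))).det) :
    ∀ (i : Fin 3) (t : ℂ),
      Q i (t * q ^ (3 : ℤ)) - T t * Q i (t * q) + Tb t * Q i (t * q⁻¹)
        - Q i (t * q ^ (-3 : ℤ)) = 0 := by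
  intro i t
  let v : ℤ → Fin 3 → ℂ := fun n i => Q i (t * q ^ n)
  have hdet (e : Fin 3 → ℤ) :
      (Matrix.of fun i j => Q i (t * q ^ e j)).det = (Matrix.of (v ∘ e)).det :=
    Matrix.det_transpose _
  have hW (m : ℤ) : (Matrix.of (v ∘ fun j : Fin 3 => m + -2 * ((j : ℕ) + 1))).det = z0 := by
    rw [← hdet, ← hw (t * q ^ m)]
    simp only [mul_assoc, ← zpow_add₀ hq]
  have hW₁ : (Matrix.of (v ∘ ![3, 1, -1])).det = z0 := by
    simpa only [show (fun j : Fin 3 => (5 : ℤ) + -2 * ((j : ℕ) + 1)) = ![3, 1, -1] by decide]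
      using hW 5
  have hW₂ : (Matrix.of (v ∘ ![1, -1, -3])).det = z0 := by
    simpa only [show (fun j : Fin 3 => (3 : ℤ) + -2 * ((j : ℕ) + 1)) = ![1, -1, -3] by decide]
      using hW 3
  have hT' : (Matrix.of (v ∘ ![3, -1, -3])).det = z0 * T t := by
    rw [hT, hdet, mul_inv_cancel_left₀ hz0]
  have hTb' : (Matrix.of (v ∘ ![3, 1, -3])).det = z0 * Tb t := by
    rw [hTb, hdet, mul_inv_cancel_left₀ hz0]
  have h := Matrix.sum_neg_one_pow_mul_det_succAbove_smul_eq_zero (v ∘ ![3, 1, -1, -3])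
  rw [Fin.sum_univ_four] at h
  simp only [Function.comp_assoc] at h
  rw [show ![(3 : ℤ), 1, -1, -3] ∘ Fin.succAbove 0 = ![1, -1, -3] by decide,
    show ![(3 : ℤ), 1, -1, -3] ∘ Fin.succAbove 1 = ![3, -1, -3] by decide,
    show ![(3 : ℤ), 1, -1, -3] ∘ Fin.succAbove 2 = ![3, 1, -3] by decide,
    show ![(3 : ℤ), 1, -1, -3] ∘ Fin.succAbove 3 = ![3, 1, -1] by decide,
    hW₁, hW₂, hT', hTb'] at h
  suffices hv : z0 • (v 3 - T t • v 1 + Tb t • v (-1) - v (-3)) = 0 by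
    simpa [v] using congrFun ((smul_eq_zero.mp hv).resolve_left hz0) i
  norm_num [Matrix.cons_val_two, Matrix.cons_val_three] at h
  linear_combination (norm := module) h
end

section
/- Let r ∈ ℂ, r ≠ 0, and set q = r². Let Q₁, Q₂, Q₃, Q̄₁, Q̄₂, Q̄₃ : ℂ → ℂ be functions and c₁, c₂, c₃, z₀ ∈ ℂ constants with z₀ ≠ 0 and c₁c₂c₃ = −z₀, satisfying both families of QQ-relations: for every t ∈ ℂ and every cyclic permutation (i,j,k) of (1,2,3), cᵢ·Q̄ᵢ(t) = Qⱼ(tq)·Qₖ(tq⁻¹) − Qₖ(tq)·Qⱼ(tq⁻¹) and −cᵢ·Qᵢ(t) = Q̄ⱼ(tq)·Q̄ₖ(tq⁻¹) − Q̄ₖ(tq)·Q̄ⱼ(tq⁻¹). For m ∈ ℤ define T_m(t) = z₀⁻¹·Σᵢ cᵢ·Qᵢ(t·r^{2m+3})·Q̄ᵢ(t·r^{−2m−3}) and T̄_m(t) = z₀⁻¹·Σᵢ cᵢ·Qᵢ(t·r^{−2m−3})·Q̄ᵢ(t·r^{2m+3}). Then the fusion relation holds: for every m ∈ ℤ and every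 t ∈ ℂ, T_m(t·r²)·T_m(t·r⁻²) = T̄_m(t) + T_{m−1}(t)·T_{m+1}(t). -/
/-!
Writing `c * v` for the coordinatewise product, the QQ-relations say that
`c * Q̄(t) = Q(tq) ⨯₃ Q(tq⁻¹)` and `-(c * Q(t)) = Q̄(tq) ⨯₃ Q̄(tq⁻¹)`. Since
`c * ((c * u) ⨯₃ (c * v)) = c₁c₂c₃ • (u ⨯₃ v) = -z₀ • (u ⨯₃ v)`, the Binet–Cauchy identity
`(u ⨯₃ v) ⬝ᵥ (w ⨯₃ x) = (u ⬝ᵥ w)(v ⬝ᵥ x) - (u ⬝ᵥ x)(v ⬝ᵥ w)`, applied to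
`u = c * Q(t r^(2m+5))`, `v = c * Q(t r^(2m+1))`, `w = Q̄(t r^(-2m-1))`, `x = Q̄(t r^(-2m-5))`,
is the fusion relation multiplied by `z₀²`.
-/
open Matrix

section CrossProduct

variable {R : Type*} [CommRing R]

theorem cross_apply_eq_add_one_add_two (u v : Fin 3 → R) (i : Fin 3) :
    (u ⨯₃ v) i = u (i + 1) * v (i + 2) - u (i + 2) * v (i + 1) := by
  fin_cases i <;> rfl

theorem mul_cross_mul (c u v : Fin 3 → R) :
    c * ((c * u) ⨯₃ (c * v)) = (c 0 * c 1 * c 2) • (u ⨯₃ v) := by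
  ext i
  simp only [Pi.mul_apply, Pi.smul_apply, smul_eq_mul, cross_apply_eq_add_one_add_two]
  fin_cases i <;> dsimp <;> ring

theorem dotProduct_mul_eq_mul_dotProduct (u c v : Fin 3 → R) :
    u ⬝ᵥ (c * v) = (c * u) ⬝ᵥ v :=
  Finset.sum_congr rfl fun _ _ => by simp only [Pi.mul_apply]; ring

theorem weighted_dotProduct_mul_sub (c A B C D E F : Fin 3 → R) (z0 : R)
    (hc : c 0 * c 1 * c 2 = -z0) (hF : c * F = A ⨯₃ C) (hE : -(c * E) = B ⨯₃ D) :
    (c * A) ⬝ᵥ B * (c * C) ⬝ᵥ D - (c * A) ⬝ᵥ D * (c * C) ⬝ᵥ B = z0 * (c * E) ⬝ᵥ F :=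
  calc _ = ((c * A) ⨯₃ (c * C)) ⬝ᵥ (B ⨯₃ D) := (cross_dot_cross _ _ _ _).symm
    _ = -((c * ((c * A) ⨯₃ (c * C))) ⬝ᵥ E) := by
      rw [← hE, dotProduct_neg, dotProduct_mul_eq_mul_dotProduct]
    _ = z0 * (c * E) ⬝ᵥ F := by
      rw [mul_cross_mul, smul_dotProduct, hc, ← hF, dotProduct_comm,
        dotProduct_mul_eq_mul_dotProduct, smul_eq_mul, neg_mul, neg_neg]

end CrossProduct

theorem fusion_of_cross {K : Type*} [Field K] {c A B C D E F : Fin 3 → K} {z0 : K}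
    (hz0 : z0 ≠ 0) (hc : c 0 * c 1 * c 2 = -z0) (hF : c * F = A ⨯₃ C) (hE : -(c * E) = B ⨯₃ D) :
    (z0⁻¹ * ∑ i, c i * A i * B i) * (z0⁻¹ * ∑ i, c i * C i * D i)
      = z0⁻¹ * ∑ i, c i * E i * F i
        + (z0⁻¹ * ∑ i, c i * C i * B i) * (z0⁻¹ * ∑ i, c i * A i * D i) := by
  have key := weighted_dotProduct_mul_sub c A B C D E F z0 hc hF hE
  simp only [dotProduct, Pi.mul_apply] at key
  field_simp
  linear_combination key

/-- The fusion relation `T_m(tq)·T_m(tq⁻¹) = T̄_m(t) + T_{m-1}(t)·T_{m+1}(t)` for the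
bilinear Q-representations of the transfer matrices, given both families of QQ-relations.
Here `r` plays the role of `q^{1/2}`, `q = r²`. -/
theorem stmt_9 (r : ℂ) (hr : r ≠ 0) (q : ℂ) (hqr : q = r ^ 2)
    (Q Qb : Fin 3 → ℂ → ℂ) (c : Fin 3 → ℂ) (z0 : ℂ) (hz0 : z0 ≠ 0)
    (hc : c 0 * c 1 * c 2 = -z0)
    (hQQ1 : ∀ (t : ℂ) (i : Fin 3),
      c i * Qb i t = Q (i + 1) (t * q) * Q (i + 2) (t * q⁻¹)
        - Q (i + 2) (t * q) * Q (i + 1) (t * q⁻¹))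
    (hQQ2 : ∀ (t : ℂ) (i : Fin 3),
      -(c i) * Q i t = Qb (i + 1) (t * q) * Qb (i + 2) (t * q⁻¹)
        - Qb (i + 2) (t * q) * Qb (i + 1) (t * q⁻¹))
    (T Tb : ℤ → ℂ → ℂ)
    (hT : ∀ (m : ℤ) (t : ℂ), T m t
      = z0⁻¹ * ∑ i : Fin 3, c i * Q i (t * r ^ (2 * m + 3)) * Qb i (t * r ^ (-(2 * m + 3))))
    (hTb : ∀ (m : ℤ) (t : ℂ), Tb m t
      = z0⁻¹ * ∑ i : Fin 3, c i * Q i (t * r ^ (-(2 * m + 3))) * Qb i (t * r ^ (2 * m + 3))) :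
    ∀ (m : ℤ) (t : ℂ),
      T m (t * r ^ (2 : ℤ)) * T m (t * r ^ (-2 : ℤ))
        = Tb m t + T (m - 1) t * T (m + 1) t := by
  intro m t
  have hcross1 (s : ℂ) :
      c * (fun i ↦ Qb i s) = (fun i ↦ Q i (s * q)) ⨯₃ (fun i ↦ Q i (s * q⁻¹)) :=
    funext fun i ↦ by rw [Pi.mul_apply, cross_apply_eq_add_one_add_two]; exact hQQ1 s i
  have hcross2 (s : ℂ) :
      -(c * fun i ↦ Q i s) = (fun i ↦ Qb i (s * q)) ⨯₃ (fun i ↦ Qb i (s * q⁻¹)) :=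
    funext fun i ↦ by
      rw [Pi.neg_apply, Pi.mul_apply, ← neg_mul, cross_apply_eq_add_one_add_two]; exact hQQ2 s i
  have hq : q = r ^ (2 : ℤ) := by rw [hqr]; norm_cast
  have hq_inv : q⁻¹ = r ^ (-2 : ℤ) := by rw [hq, _root_.zpow_neg]
  have shift (a b e : ℤ) (h : a + b = e) : t * r ^ a * r ^ b = t * r ^ e := by
    rw [mul_assoc, ← zpow_add₀ hr, h]
  have hF := hcross1 (t * r ^ (2 * m + 3))
  have hE := hcross2 (t * r ^ (-(2 * m + 3)))
  rw [hq_inv, hq, shift _ 2 (2 * m + 5) (by ring), shift _ (-2) (2 * m + 1) (by ring)] at hF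
  rw [hq_inv, hq, shift _ 2 (-(2 * m + 1)) (by ring), shift _ (-2) (-(2 * m + 5)) (by ring)] at hE
  rw [hT, hT, hT, hT, hTb, shift 2 _ (2 * m + 5) (by ring), shift 2 _ (-(2 * m + 1)) (by ring),
    shift (-2) _ (2 * m + 1) (by ring), shift (-2) _ (-(2 * m + 5)) (by ring),
    show 2 * (m - 1) + 3 = 2 * m + 1 by ring, show 2 * (m + 1) + 3 = 2 * m + 5 by ring]
  exact fusion_of_cross hz0 hc hF hE
end

section
/- Let q ∈ ℂ, q ≠ 0, let Q₁, Q₂, Q₃, Q̄₁, Q̄₂, Q̄₃ : ℂ → ℂ be functions and c₁, c₂, c₃, z₀ ∈ ℂ constants such that: (a) the quantum Wronskian condition holds, det(Qᵢ(t·q^{−2j}))_{i,j∈{1,2,3}} = z₀ for every t ∈ ℂ; and (b) the first family of QQ-relations holds, cᵢ·Q̄ᵢ(t) = Qⱼ(tq)·Qₖ(tq⁻¹) − Qₖ(tq)·Qⱼ(tq⁻¹) for every t and every cyclic permutation (i,j,k) of (1,2,3). Then for every t ∈ ℂ: (c₁c₂c₃)·det(Q̄ᵢ(t·q^{2j}))_{i,j∈{1,2,3}}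 = −z₀². -/
/-!
The QQ-relations say that the vector `(cᵢ Q̄ᵢ(s))ᵢ` is the cross product `Q(sq) × Q(sq⁻¹)`.
With `a, b, c, d` the vectors `Q(tq), Q(tq³), Q(tq⁵), Q(tq⁷)`, the rescaled barred determinant
is therefore `det(b × a, c × b, d × c)`. Expanding the vector triple product
`(c × b) × (d × c) = -[d, c, b] c` turns it into `-[c, b, a] [d, c, b]`, a product of two
quantum Wronskians, each equal to `z₀`.
-/

open Matrix

theorem det_cross_chain {R : Type*} [CommRing R] (a b c d : Fin 3 → R) :
    det ![b ⨯₃ a, c ⨯₃ b, d ⨯₃ c] = -(det ![c, b, a] * det ![d, c, b]) := by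
  have hcc : c ⨯₃ b ⨯₃ (d ⨯₃ c) = -(det ![d, c, b] • c) := by
    rw [cross_cross_eq_smul_sub_smul, dot_cross_self, zero_smul, zero_sub,
      triple_product_permutation b, triple_product_eq_det]
  rw [← triple_product_eq_det, hcc, dotProduct_neg, dotProduct_smul, dotProduct_comm,
    triple_product_eq_det, smul_eq_mul, mul_comm]

/-- The companion quantum Wronskian identity for the barred Q-functions:
given the quantum Wronskian condition for the `Qᵢ` and the first family of
QQ-relations, `(c₁c₂c₃)·det(Q̄ᵢ(t·q^{2j}))_{i,j=1,2,3} = -z₀²`. -/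
theorem stmt_10 (q : ℂ) (hq : q ≠ 0) (Q Qb : Fin 3 → ℂ → ℂ) (c : Fin 3 → ℂ) (z0 : ℂ)
    (hw : ∀ t : ℂ,
      (Matrix.of fun i j : Fin 3 => Q i (t * q ^ (-2 * (((j : ℕ) : ℤ) + 1)))).det = z0)
    (hQQ : ∀ (t : ℂ) (i : Fin 3),
      c i * Qb i t = Q (i + 1) (t * q) * Q (i + 2) (t * q⁻¹)
        - Q (i + 2) (t * q) * Q (i + 1) (t * q⁻¹)) :
    ∀ t : ℂ,
      (c 0 * c 1 * c 2) *
        (Matrix.of fun i j : Fin 3 => Qb i (t * q ^ (2 * (((j : ℕ) : ℤ) + 1)))).det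
      = -z0 ^ 2 := by
  intro t
  let v (k : ℤ) : Fin 3 → ℂ := fun i => Q i (t * q ^ k)
  have hcross (k : ℤ) : (fun i => c i * Qb i (t * q ^ k)) = v (k + 1) ⨯₃ v (k - 1) := by
    have hs := hQQ (t * q ^ k)
    simp only [mul_assoc, ← zpow_add_one₀ hq, ← zpow_sub_one₀ hq] at hs
    ext i; fin_cases i <;> simp [hs, cross_apply, v]
  have hwron (k : ℤ) : det ![v (k + 4), v (k + 2), v k] = z0 := by
    have hs := hw (t * q ^ (k + 6))
    simp only [mul_assoc, ← zpow_add₀ hq] at hs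
    rw [← hs, ← det_transpose]
    congr 1; ext i j; fin_cases i <;> simp [v] <;> ring_nf
  have hwron1 : det ![v 5, v 3, v 1] = z0 := by simpa using hwron 1
  have hwron3 : det ![v 7, v 5, v 3] = z0 := by simpa using hwron 3
  calc (c 0 * c 1 * c 2) * (of fun i j : Fin 3 => Qb i (t * q ^ (2 * ((j : ℕ) + 1 : ℤ)))).det
      = (of fun i j : Fin 3 => c i * Qb i (t * q ^ (2 * ((j : ℕ) + 1 : ℤ)))).det := by
        rw [← Fin.prod_univ_three]; exact (det_mul_column c _).symm
    _ = det ![v 3 ⨯₃ v 1, v 5 ⨯₃ v 3, v 7 ⨯₃ v 5] := by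
        rw [← det_transpose]; congr 1; ext i j
        fin_cases i
        · simpa using congrFun (hcross 2) j
        · simpa using congrFun (hcross 4) j
        · simpa using congrFun (hcross 6) j
    _ = -z0 ^ 2 := by rw [det_cross_chain, hwron1, hwron3]; ring
end

section
/- Let a be a positive real number and C ∈ ℂ. Define f : ℂ → ℂ by f(t) = 2π·exp(C·t)·(Γ(1/2 + a·t·e^{iπ/6})·Γ(1/2 + a·t·e^{−iπ/6}))⁻¹, where Γ is the complex Gamma function. Then for every t ∈ ℂ: f(t·e^{iπ/3})·f(t·e^{−iπ/3}) = 2·cosh(π·a·t)·f(t). -/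
/-!
Write `ζ = e^{iπ/6}`, so that the shifts are `t ↦ t ζ^{±2}`. Since `ζ^3 = i`, the shifted arguments
`a t ζ^{±2} ζ^{±1}` are `a t ζ^{±1}` (the two Gamma factors of `f t`) and `±i a t`; Euler's reflection
formula turns `Γ(1/2 + i a t) Γ(1/2 - i a t)` into `π / cosh(π a t)`. The exponential prefactors
combine to `e^{Ct}` because `ζ^2 + ζ^{-2} = 2 cos(π/3) = 1`.
-/

open Complex
open scoped Real

namespace Complex

theorem Gamma_one_half_add_mul_Gamma_one_half_sub (z : ℂ) :
    Gamma (1 / 2 + z) * Gamma (1 / 2 - z) = π / cos (π * z) := by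
  rw [show (1 / 2 : ℂ) - z = 1 - (1 / 2 + z) by ring, Gamma_mul_Gamma_one_sub,
    show (π : ℂ) * (1 / 2 + z) = π * z + π / 2 by ring, sin_add_pi_div_two]

theorem Gamma_one_half_add_mul_I_mul_Gamma_one_half_sub_mul_I (s : ℂ) :
    Gamma (1 / 2 + s * I) * Gamma (1 / 2 - s * I) = π / cosh (π * s) := by
  rw [Gamma_one_half_add_mul_Gamma_one_half_sub, ← mul_assoc, cos_mul_I]

end Complex

noncomputable def vacuumEigenvalue (b C ζ t : ℂ) : ℂ :=
  2 * π * exp (C * t) * (Gamma (1 / 2 + b * t * ζ) * Gamma (1 / 2 + b * t * ζ⁻¹))⁻¹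

theorem vacuumEigenvalue_mul_vacuumEigenvalue {ζ : ℂ} (hζ_cube : ζ ^ 3 = I)
    (hζ_sq : ζ ^ 2 + (ζ ^ 2)⁻¹ = 1) (b C t : ℂ) :
    vacuumEigenvalue b C ζ (t * ζ ^ 2) * vacuumEigenvalue b C ζ (t * (ζ ^ 2)⁻¹) =
      2 * cosh (π * b * t) * vacuumEigenvalue b C ζ t := by
  have hζ : ζ ≠ 0 := by rintro rfl; simp [eq_comm] at hζ_cube
  have hexp : exp (C * (t * ζ ^ 2)) * exp (C * (t * (ζ ^ 2)⁻¹)) = exp (C * t) := by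
    rw [← exp_add, ← mul_add, ← mul_add, hζ_sq, mul_one]
  have hrefl :
      (Gamma (1 / 2 + b * t * I) * Gamma (1 / 2 - b * t * I))⁻¹ = cosh (π * b * t) / π := by
    rw [Gamma_one_half_add_mul_I_mul_Gamma_one_half_sub_mul_I, inv_div, mul_assoc]
  unfold vacuumEigenvalue
  rw [show b * (t * ζ ^ 2) * ζ = b * t * I by rw [← hζ_cube]; ring,
    show b * (t * ζ ^ 2) * ζ⁻¹ = b * t * ζ by field_simp,
    show b * (t * (ζ ^ 2)⁻¹) * ζ = b * t * ζ⁻¹ by field_simp,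
    show 1 / 2 + b * (t * (ζ ^ 2)⁻¹) * ζ⁻¹ = 1 / 2 - b * t * I by
      rw [show b * (t * (ζ ^ 2)⁻¹) * ζ⁻¹ = b * t * (ζ ^ 3)⁻¹ by ring, hζ_cube, inv_I]; ring]
  calc _ = 4 * π ^ 2 * (exp (C * (t * ζ ^ 2)) * exp (C * (t * (ζ ^ 2)⁻¹)))
        * (Gamma (1 / 2 + b * t * I) * Gamma (1 / 2 - b * t * I))⁻¹
        * (Gamma (1 / 2 + b * t * ζ) * Gamma (1 / 2 + b * t * ζ⁻¹))⁻¹ := by ring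
    _ = _ := by rw [hexp, hrefl]; field_simp; ring

theorem exp_pi_mul_I_div_six_pow_three : exp (π * I / 6) ^ 3 = I := by
  rw [← exp_nat_mul, show ((3 : ℕ) : ℂ) * (π * I / 6) = (π / 2 : ℂ) * I by push_cast; ring,
    exp_mul_I, cos_pi_div_two, sin_pi_div_two]
  ring

theorem exp_pi_mul_I_div_six_sq_add_inv :
    exp (π * I / 6) ^ 2 + (exp (π * I / 6) ^ 2)⁻¹ = 1 := by
  rw [← exp_nat_mul, ← exp_neg, show ((2 : ℕ) : ℂ) * (π * I / 6) = ((π / 3 : ℝ) : ℂ) * I by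
    push_cast; ring, neg_mul_eq_neg_mul, ← two_cos, ← ofReal_cos, Real.cos_pi_div_three]
  norm_num

theorem stmt_11_general (a : ℝ) (C : ℂ) (f : ℂ → ℂ)
    (hf : ∀ t : ℂ, f t = 2 * (Real.pi : ℂ) * Complex.exp (C * t) *
      (Complex.Gamma (1 / 2 + (a : ℂ) * t * Complex.exp ((Real.pi : ℂ) * Complex.I / 6)) *
       Complex.Gamma (1 / 2 + (a : ℂ) * t * Complex.exp (-((Real.pi : ℂ) * Complex.I) / 6)))⁻¹) :
    ∀ t : ℂ,
      f (t * Complex.exp ((Real.pi : ℂ) * Complex.I / 3)) *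
        f (t * Complex.exp (-((Real.pi : ℂ) * Complex.I) / 3))
      = 2 * Complex.cosh ((Real.pi : ℂ) * (a : ℂ) * t) * f t := by
  intro t
  set ζ := exp (π * I / 6)
  have hf_eq : f = vacuumEigenvalue a C ζ := by
    funext s
    rw [hf, vacuumEigenvalue, neg_div, exp_neg]
  have hω : exp (π * I / 3) = ζ ^ 2 := by
    rw [← exp_nat_mul]; congr 1; push_cast; ring
  rw [hf_eq, neg_div, exp_neg, hω]
  exact vacuumEigenvalue_mul_vacuumEigenvalue exp_pi_mul_I_div_six_pow_three
    exp_pi_mul_I_div_six_sq_add_inv a C t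

/-- The vacuum eigenvalue `f(t) = 2π e^{Ct}/(Γ(1/2 + a t e^{iπ/6})Γ(1/2 + a t e^{-iπ/6}))`
of the fundamental transfer matrix of the W₃ CFT at `c = -2` satisfies
`f(t e^{iπ/3})·f(t e^{-iπ/3}) = 2 cosh(πat)·f(t)` for all `t ∈ ℂ`. -/
theorem stmt_11 (a : ℝ) (ha : 0 < a) (C : ℂ) (f : ℂ → ℂ)
    (hf : ∀ t : ℂ, f t = 2 * (Real.pi : ℂ) * Complex.exp (C * t) *
      (Complex.Gamma (1 / 2 + (a : ℂ) * t * Complex.exp ((Real.pi : ℂ) * Complex.I / 6)) *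
       Complex.Gamma (1 / 2 + (a : ℂ) * t * Complex.exp (-((Real.pi : ℂ) * Complex.I) / 6)))⁻¹) :
    ∀ t : ℂ,
      f (t * Complex.exp ((Real.pi : ℂ) * Complex.I / 3)) *
        f (t * Complex.exp (-((Real.pi : ℂ) * Complex.I) / 3))
      = 2 * Complex.cosh ((Real.pi : ℂ) * (a : ℂ) * t) * f t :=
  stmt_11_general a C f hf
end

section
/- Let a be a positive real number, n ∈ ℕ, and define p : ℂ → ℂ by p(t) = ((1+2n − 2at·e^{iπ/6})·(1+2n − 2at·e^{−iπ/6})) / ((1+2n + 2at·e^{iπ/6})·(1+2n + 2at·e^{−iπ/6})). Let t ∈ ℂ be such that the four numbers 1+2n + 2at·e^{iπ/6}, 1+2n + 2at·e^{−iπ/6}, 1+2n + 2iat and 1+2n − 2iat are all nonzero. Then p(t·e^{iπ/3})·p(t·e^{−iπ/3}) = p(t). -/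
/-!
With `ω = e^{iπ/6}` and the Cayley factor `f(z) = (c - z)/(c + z)`, `c = 1 + 2n`, the rational
factor is `p(t) = f(2at ω) f(2at ω⁻¹)`. Rotating `t` by `ω^{±2}` shifts the pair `(ω, ω⁻¹)` to
`(ω³, ω)` and `(ω⁻¹, ω⁻³)`, so `p(tω²) p(tω⁻²) = f(2at ω³) f(2at ω⁻³) p(t)`. Since `ω³ = i = -ω⁻³`
and `f(z) f(-z) = 1`, the extra factor is `1`.
-/

open Complex
open scoped Real

section RationalFactor

variable {K : Type*} [Field K]

def cayley (c z : K) : K := (c - z) / (c + z)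

theorem cayley_mul_cayley_neg {c z : K} (h_add : c + z ≠ 0) (h_sub : c - z ≠ 0) :
    cayley c z * cayley c (-z) = 1 := by
  rw [cayley, cayley, sub_neg_eq_add, ← sub_eq_add_neg]
  field_simp

def rationalFactor (c w w' s : K) : K :=
  ((c - s * w) * (c - s * w')) / ((c + s * w) * (c + s * w'))

theorem rationalFactor_eq_cayley_mul (c w w' s : K) :
    rationalFactor c w w' s = cayley c (s * w) * cayley c (s * w') :=
  (div_mul_div_comm _ _ _ _).symm

theorem rationalFactor_mul_sq_mul_rationalFactor_mul_sq {c w w' s : K} (hw : w * w' = 1)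
    (hw3 : w' ^ 3 = -w ^ 3) (h_add : c + s * w ^ 3 ≠ 0) (h_sub : c - s * w ^ 3 ≠ 0) :
    rationalFactor c w w' (s * w ^ 2) * rationalFactor c w w' (s * w' ^ 2) =
      rationalFactor c w w' s := by
  have hww : s * w ^ 2 * w' = s * w := by linear_combination s * w * hw
  have hw'w' : s * w' ^ 2 * w = s * w' := by linear_combination s * w' * hw
  have hcube : s * w' ^ 2 * w' = -(s * w ^ 3) := by linear_combination s * hw3
  simp only [rationalFactor_eq_cayley_mul, hww, hw'w', hcube]
  rw [show s * w ^ 2 * w = s * w ^ 3 by ring]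
  linear_combination (cayley c (s * w) * cayley c (s * w')) *
    cayley_mul_cayley_neg h_add h_sub

end RationalFactor

theorem stmt_13_general (a : ℝ) (n : ℕ) (p : ℂ → ℂ)
    (hp : ∀ t : ℂ, p t =
      ((1 + 2 * (n : ℂ) - 2 * (a : ℂ) * t * Complex.exp ((Real.pi : ℂ) * Complex.I / 6)) *
       (1 + 2 * (n : ℂ) - 2 * (a : ℂ) * t * Complex.exp (-((Real.pi : ℂ) * Complex.I) / 6))) /
      ((1 + 2 * (n : ℂ) + 2 * (a : ℂ) * t * Complex.exp ((Real.pi : ℂ) * Complex.I / 6)) *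
       (1 + 2 * (n : ℂ) + 2 * (a : ℂ) * t * Complex.exp (-((Real.pi : ℂ) * Complex.I) / 6))))
    (t : ℂ)
    (h3 : 1 + 2 * (n : ℂ) + 2 * Complex.I * (a : ℂ) * t ≠ 0)
    (h4 : 1 + 2 * (n : ℂ) - 2 * Complex.I * (a : ℂ) * t ≠ 0) :
    p (t * Complex.exp ((Real.pi : ℂ) * Complex.I / 3)) *
      p (t * Complex.exp (-((Real.pi : ℂ) * Complex.I) / 3)) = p t := by
  set ω := exp (π * I / 6)
  set ω' := exp (-(π * I) / 6)
  have hω : ω * ω' = 1 := by rw [← exp_add, ← exp_zero]; ring_nf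
  have hω_sq : exp (π * I / 3) = ω ^ 2 := by rw [← exp_nat_mul]; ring_nf
  have hω'_sq : exp (-(π * I) / 3) = ω' ^ 2 := by rw [← exp_nat_mul]; ring_nf
  have hω_cube : ω ^ 3 = I := by
    rw [← exp_nat_mul]; convert exp_pi_div_two_mul_I using 2; push_cast; ring
  have hω'_cube : ω' ^ 3 = -I := by
    rw [← exp_nat_mul]; convert exp_neg_pi_div_two_mul_I using 2; push_cast; ring
  have hp' : ∀ u, p u = rationalFactor (1 + 2 * (n : ℂ)) ω ω' (2 * a * u) := hp
  rw [hp', hp', hp', hω_sq, hω'_sq, ← mul_assoc, ← mul_assoc]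
  refine rationalFactor_mul_sq_mul_rationalFactor_mul_sq hω (by rw [hω_cube, hω'_cube]) ?_ ?_
  · rwa [hω_cube, mul_right_comm, mul_right_comm 2 (a : ℂ) I]
  · rwa [hω_cube, mul_right_comm, mul_right_comm 2 (a : ℂ) I]

/-- Multiplicative invariance of each rational factor
`p(t) = ((1+2n - 2at e^{iπ/6})(1+2n - 2at e^{-iπ/6}))/((1+2n + 2at e^{iπ/6})(1+2n + 2at e^{-iπ/6}))`
under `t ↦ (t e^{iπ/3}, t e^{-iπ/3})`: `p(te^{iπ/3})·p(te^{-iπ/3}) = p(t)`,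
provided the relevant four factors are nonzero. -/
theorem stmt_13 (a : ℝ) (ha : 0 < a) (n : ℕ) (p : ℂ → ℂ)
    (hp : ∀ t : ℂ, p t =
      ((1 + 2 * (n : ℂ) - 2 * (a : ℂ) * t * Complex.exp ((Real.pi : ℂ) * Complex.I / 6)) *
       (1 + 2 * (n : ℂ) - 2 * (a : ℂ) * t * Complex.exp (-((Real.pi : ℂ) * Complex.I) / 6))) /
      ((1 + 2 * (n : ℂ) + 2 * (a : ℂ) * t * Complex.exp ((Real.pi : ℂ) * Complex.I / 6)) *
       (1 + 2 * (n : ℂ) + 2 * (a : ℂ) * t * Complex.exp (-((Real.pi : ℂ) * Complex.I) / 6))))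
    (t : ℂ)
    (h1 : 1 + 2 * (n : ℂ) + 2 * (a : ℂ) * t * Complex.exp ((Real.pi : ℂ) * Complex.I / 6) ≠ 0)
    (h2 : 1 + 2 * (n : ℂ) + 2 * (a : ℂ) * t * Complex.exp (-((Real.pi : ℂ) * Complex.I) / 6) ≠ 0)
    (h3 : 1 + 2 * (n : ℂ) + 2 * Complex.I * (a : ℂ) * t ≠ 0)
    (h4 : 1 + 2 * (n : ℂ) - 2 * Complex.I * (a : ℂ) * t ≠ 0) :
    p (t * Complex.exp ((Real.pi : ℂ) * Complex.I / 3)) *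
      p (t * Complex.exp (-((Real.pi : ℂ) * Complex.I) / 3)) = p t :=
  stmt_13_general a n p hp t h3 h4
end

section
/- Let g > 0 be real, let ν₁, ν₂, ν₃, E, y₀ ∈ ℂ satisfy exp(−3y₀) = −g³·E, and set σ₂ = ν₁ν₂ + ν₁ν₃ + ν₂ν₃ and σ₃ = ν₁ν₂ν₃. Suppose Ψ : ℂ → ℂ is holomorphic and satisfies, for all y ∈ ℂ, the third-order equation Ψ'''(y) − σ₂·Ψ'(y) + (i·σ₃ + exp((3/g)·y) − E·exp(3y))·Ψ(y) = 0. Define Φ(y) = Ψ(g·y + y₀). Then Φ is holomorphic and satisfies, for all y ∈ ℂ, the equation of the same form with dual parameters: Φ'''(y) − g²σ₂·Φ'(y) + (i·g³σ₃ + exp(3g·y) − E'·exp(3y))·Φ(y) = 0, where E' = −g³·exp(3y₀/g). -/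
/-!
The substitution `y ↦ g y + y₀` multiplies the `n`-th derivative by `gⁿ`, so after multiplying the
equation by `g³` it keeps its shape, with `σ₂, σ₃` scaled to `g²σ₂, g³σ₃`. In the new potential
the two exponentials trade places: `g³ e^{3(gy + y₀)/g} = g³ e^{3y₀/g} e^{3y}`, while the
normalisation `e^{-3y₀} = -g³E` turns `-g³E e^{3(gy + y₀)}` into `e^{3gy}`.
-/

open Complex

section ThirdOrder

variable {𝕜 : Type*} [NontriviallyNormedField 𝕜]

theorem iteratedDeriv_comp_mul_add {n : ℕ} {f : 𝕜 → 𝕜} (hf : ContDiff 𝕜 n f) (a b : 𝕜) :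
    iteratedDeriv n (fun x => f (a * x + b)) = fun x => a ^ n * iteratedDeriv n f (a * x + b) := by
  have hshift : ContDiff 𝕜 n (fun z => f (z + b)) := hf.comp (contDiff_id.add contDiff_const)
  rw [iteratedDeriv_comp_const_mul hshift a, iteratedDeriv_comp_add_const]

def SolvesThirdOrder (s : 𝕜) (V Ψ : 𝕜 → 𝕜) : Prop :=
  ∀ y, iteratedDeriv 3 Ψ y - s * deriv Ψ y + V y * Ψ y = 0

theorem SolvesThirdOrder.comp_mul_add {s : 𝕜} {V Ψ : 𝕜 → 𝕜} (h : SolvesThirdOrder s V Ψ)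
    (hΨ : ContDiff 𝕜 3 Ψ) (a b : 𝕜) :
    SolvesThirdOrder (a ^ 2 * s) (fun y => a ^ 3 * V (a * y + b)) (fun y => Ψ (a * y + b)) := by
  intro y
  have h3 := congrFun (iteratedDeriv_comp_mul_add hΨ a b) y
  have h1 := congrFun (iteratedDeriv_comp_mul_add (hΨ.of_le (by norm_num) : ContDiff 𝕜 1 Ψ) a b) y
  simp only [iteratedDeriv_one, pow_one] at h1
  rw [h3, h1]
  linear_combination a ^ 3 * h (a * y + b)

end ThirdOrder

theorem stmt_14_general (g : ℝ) (hg : 0 < g) (E y₀ : ℂ)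
    (hy₀ : Complex.exp (-3 * y₀) = -(g : ℂ) ^ 3 * E)
    (σ₂ σ₃ : ℂ)
    (Ψ : ℂ → ℂ) (hΨ : Differentiable ℂ Ψ)
    (hode : ∀ y : ℂ,
      iteratedDeriv 3 Ψ y - σ₂ * deriv Ψ y
        + (Complex.I * σ₃ + Complex.exp ((3 / (g : ℂ)) * y) - E * Complex.exp (3 * y)) * Ψ y
        = 0)
    (Φ : ℂ → ℂ) (hΦ : ∀ y : ℂ, Φ y = Ψ ((g : ℂ) * y + y₀))
    (E' : ℂ) (hE' : E' = -(g : ℂ) ^ 3 * Complex.exp (3 * y₀ / (g : ℂ))) :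
    Differentiable ℂ Φ ∧
    ∀ y : ℂ,
      iteratedDeriv 3 Φ y - (g : ℂ) ^ 2 * σ₂ * deriv Φ y
        + (Complex.I * ((g : ℂ) ^ 3 * σ₃) + Complex.exp (3 * (g : ℂ) * y)
            - E' * Complex.exp (3 * y)) * Φ y
        = 0 := by
  have hg0 : (g : ℂ) ≠ 0 := ofReal_ne_zero.mpr hg.ne'
  obtain rfl : Φ = fun y => Ψ (g * y + y₀) := funext hΦ
  refine ⟨hΨ.comp (by fun_prop), fun y => ?_⟩
  have hdual := SolvesThirdOrder.comp_mul_add hode hΨ.contDiff (g : ℂ) y₀ y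
  have hexp₁ : exp (3 / (g : ℂ) * (g * y + y₀)) = exp (3 * y₀ / g) * exp (3 * y) := by
    rw [← exp_add]; congr 1; field_simp; ring
  have hexp₂ : exp (-3 * y₀) * exp (3 * (g * y + y₀)) = exp (3 * g * y) := by
    rw [← exp_add]; ring_nf
  rw [hy₀] at hexp₂
  rw [hE']
  linear_combination hdual - g ^ 3 * Ψ (g * y + y₀) * hexp₁ - Ψ (g * y + y₀) * hexp₂

/-- The duality transformation of the third-order differential equation:
if `Ψ` is entire and satisfies
`Ψ''' - σ₂Ψ' + (iσ₃ + e^{3y/g} - E e^{3y})Ψ = 0` with `e^{-3y₀} = -g³E`, then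
`Φ(y) = Ψ(gy + y₀)` is entire and satisfies the equation of the same form with dual
parameters `g²σ₂`, `g³σ₃`, `E' = -g³ e^{3y₀/g}`. -/
theorem stmt_14 (g : ℝ) (hg : 0 < g) (ν₁ ν₂ ν₃ E y₀ : ℂ)
    (hy₀ : Complex.exp (-3 * y₀) = -(g : ℂ) ^ 3 * E)
    (σ₂ σ₃ : ℂ) (hσ₂ : σ₂ = ν₁ * ν₂ + ν₁ * ν₃ + ν₂ * ν₃) (hσ₃ : σ₃ = ν₁ * ν₂ * ν₃)
    (Ψ : ℂ → ℂ) (hΨ : Differentiable ℂ Ψ)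
    (hode : ∀ y : ℂ,
      iteratedDeriv 3 Ψ y - σ₂ * deriv Ψ y
        + (Complex.I * σ₃ + Complex.exp ((3 / (g : ℂ)) * y) - E * Complex.exp (3 * y)) * Ψ y
        = 0)
    (Φ : ℂ → ℂ) (hΦ : ∀ y : ℂ, Φ y = Ψ ((g : ℂ) * y + y₀))
    (E' : ℂ) (hE' : E' = -(g : ℂ) ^ 3 * Complex.exp (3 * y₀ / (g : ℂ))) :
    Differentiable ℂ Φ ∧
    ∀ y : ℂ,
      iteratedDeriv 3 Φ y - (g : ℂ) ^ 2 * σ₂ * deriv Φ y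
        + (Complex.I * ((g : ℂ) ^ 3 * σ₃) + Complex.exp (3 * (g : ℂ) * y)
            - E' * Complex.exp (3 * y)) * Φ y
        = 0 :=
  stmt_14_general g hg E y₀ hy₀ σ₂ σ₃ Ψ hΨ hode Φ hΦ E' hE'
end
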